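/- arXiv:2604.09074 — 3 statements merged into one kernel-verified Lean document; each statement's English description precedes it below -/
import Mathlib

section
/- Let Ψ ∈ ℝ^{(n+m)×(n+m)} be symmetric positive definite with first m rows Ψ₁ and last n rows Ψ₂, let X̄₁ ∈ ℝ^{n×(n+m)}, set [B̂ Â] := X̄₁ Ψ⁻¹, fix Q ∈ ℝ^{n×n}, R ∈ ℝ^{m×m}, λ ∈ ℝ, σ_w² ∈ ℝ. Define the indirect value set 𝒥_ind := { Tr((Q + Kᵀ R K)Σ) + λ Tr([Kᵀ Iₙ] Ψ⁻¹ [Kᵀ Iₙ]ᵀ Σ) : K ∈ ℝ^{m×n}, Σ ∈ ℝ^{n×n} symmetric positive semidefinite, Σ = σ_w² Iₙ + [B̂ Â][Kᵀ Iₙ]ᵀ Σ ([B̂ Â][Kᵀ Iₙ]ᵀ)ᵀ } and the direct value set 𝒥_dir := { Tr((Q + Vᵀ Ψ₁ᵀ R Ψ₁ V)Σ) + λ Tr(Ψ V Σ Vᵀ) : V ∈ ℝ^{(n+m)×n}, Σ ∈ ℝ^{n×n} symmetric positive semidefinite, Ψ₂ V = Iₙ, Σ = σ_w² Iₙ + X̄₁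 V Σ Vᵀ X̄₁ᵀ }. Then 𝒥_ind = 𝒥_dir; in particular the two optimization problems have the same optimal value (the infima of the two sets coincide). -/
/-!
The substitution `V = Ψ⁻¹ [K; I]` identifies gains `K` with the matrices `V` satisfying
`Ψ₂ V = I`, the inverse being `K = Ψ₁ V`, since `Ψ V = [Ψ₁ V; Ψ₂ V]`. Under it the
closed-loop matrix `[B̂ Â] [K; I] = X̄₁ Ψ⁻¹ [K; I]` becomes `X̄₁ V`, and the regularizer
`[K; I]ᵀ Ψ⁻¹ [K; I] = Vᵀ Ψ V` (`Ψ` is symmetric), so feasible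
points and their costs correspond exactly.
-/

open Matrix

variable {α l m n p : Type*}

lemma fromRows_submatrix_mul [Fintype n] [Semiring α]
    (A : Matrix (l ⊕ m) n α) (B : Matrix n p α) :
    fromRows (A.submatrix Sum.inl id * B) (A.submatrix Sum.inr id * B) = A * B := by
  rw [← fromRows_mul]
  exact congrArg (· * B) (fromRows_toRows A)

section DirectParametrization

variable [CommRing α] [Fintype m] [Fintype n] [DecidableEq n]
  {Ψ : Matrix (m ⊕ n) (m ⊕ n) α} {V : Matrix (m ⊕ n) n α}

lemma fromRows_submatrix_inl_mul_one (hV : Ψ.submatrix Sum.inr id * V = 1) :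
    fromRows (Ψ.submatrix Sum.inl id * V) (1 : Matrix n n α) = Ψ * V := by
  rw [← hV, fromRows_submatrix_mul]

lemma exists_submatrix_inr_mul_eq_one [DecidableEq m] (hΨ : IsUnit Ψ.det) (K : Matrix m n α) :
    ∃ V : Matrix (m ⊕ n) n α,
      Ψ.submatrix Sum.inr id * V = 1 ∧ Ψ.submatrix Sum.inl id * V = K := by
  refine ⟨Ψ⁻¹ * fromRows K (1 : Matrix n n α), ?_⟩
  have h := mul_nonsing_inv_cancel_left Ψ (fromRows K (1 : Matrix n n α)) hΨ
  rw [← fromRows_submatrix_mul] at h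
  exact (fromRows_inj h).symm

lemma mul_nonsing_inv_mul_fromRows_submatrix_inl [DecidableEq m] (hΨ : IsUnit Ψ.det)
    (hV : Ψ.submatrix Sum.inr id * V = 1) (X : Matrix p (m ⊕ n) α) :
    X * Ψ⁻¹ * fromRows (Ψ.submatrix Sum.inl id * V) (1 : Matrix n n α) = X * V := by
  rw [fromRows_submatrix_inl_mul_one hV, Matrix.mul_assoc, nonsing_inv_mul_cancel_left _ _ hΨ]

lemma trace_fromRows_submatrix_inl_transpose_mul_nonsing_inv [DecidableEq m] (hΨ : IsUnit Ψ.det)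
    (hsymm : Ψᵀ = Ψ) (hV : Ψ.submatrix Sum.inr id * V = 1) (S : Matrix n n α) :
    ((fromRows (Ψ.submatrix Sum.inl id * V) (1 : Matrix n n α))ᵀ * Ψ⁻¹
        * fromRows (Ψ.submatrix Sum.inl id * V) (1 : Matrix n n α) * S).trace
      = (Ψ * V * S * Vᵀ).trace := by
  rw [fromRows_submatrix_inl_mul_one hV, transpose_mul, hsymm, Matrix.mul_assoc (Vᵀ * Ψ),
    nonsing_inv_mul_cancel_left _ _ hΨ, Matrix.mul_assoc, Matrix.mul_assoc, trace_mul_comm]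
  simp only [Matrix.mul_assoc]

end DirectParametrization

/-- Theorem 2 of the paper. Equivalence of the indirect and the direct
Bayesian data-driven LQR formulations: with `[B̂ Â] = X̄₁ Ψ⁻¹`, the set of cost values of
feasible points of the indirect problem equals that of the direct (covariance
parametrized) problem; in particular the infima coincide. -/
theorem stmt6 (n m : ℕ)
    (Ψ : Matrix (Fin m ⊕ Fin n) (Fin m ⊕ Fin n) ℝ) (hΨ : Ψ.PosDef)
    (Xb : Matrix (Fin n) (Fin m ⊕ Fin n) ℝ)
    (Q : Matrix (Fin n) (Fin n) ℝ) (R : Matrix (Fin m) (Fin m) ℝ)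
    (lam σw2 : ℝ)
    (Jind Jdir : Set ℝ)
    (hJind : Jind = {c : ℝ |
      ∃ (K : Matrix (Fin m) (Fin n) ℝ) (Sig : Matrix (Fin n) (Fin n) ℝ),
        Sig.PosSemidef ∧
        Sig = σw2 • (1 : Matrix (Fin n) (Fin n) ℝ)
          + (Xb * Ψ⁻¹ * fromRows K (1 : Matrix (Fin n) (Fin n) ℝ)) * Sig
            * (Xb * Ψ⁻¹ * fromRows K (1 : Matrix (Fin n) (Fin n) ℝ))ᵀ ∧
        c = ((Q + Kᵀ * R * K) * Sig).trace
          + lam * ((fromRows K (1 : Matrix (Fin n) (Fin n) ℝ))ᵀ * Ψ⁻¹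
              * fromRows K (1 : Matrix (Fin n) (Fin n) ℝ) * Sig).trace})
    (hJdir : Jdir = {c : ℝ |
      ∃ (V : Matrix (Fin m ⊕ Fin n) (Fin n) ℝ) (Sig : Matrix (Fin n) (Fin n) ℝ),
        Sig.PosSemidef ∧
        Ψ.submatrix Sum.inr id * V = 1 ∧
        Sig = σw2 • (1 : Matrix (Fin n) (Fin n) ℝ) + Xb * V * Sig * Vᵀ * Xbᵀ ∧
        c = ((Q + Vᵀ * (Ψ.submatrix Sum.inl id)ᵀ * R * Ψ.submatrix Sum.inl id * V)
              * Sig).trace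
          + lam * (Ψ * V * Sig * Vᵀ).trace}) :
    Jind = Jdir ∧ sInf Jind = sInf Jdir := by
  have hdet : IsUnit Ψ.det := (isUnit_iff_isUnit_det Ψ).mp hΨ.isUnit
  have hsymm : Ψᵀ = Ψ := hΨ.isHermitian.eq
  have hJ : Jind = Jdir := by
    subst hJind hJdir
    ext c
    constructor
    · rintro ⟨K, Sig, hSig, hfix, rfl⟩
      obtain ⟨V, hV, rfl⟩ := exists_submatrix_inr_mul_eq_one hdet K
      rw [mul_nonsing_inv_mul_fromRows_submatrix_inl hdet hV] at hfix
      refine ⟨V, Sig, hSig, hV, ?_, ?_⟩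
      · simpa only [transpose_mul, Matrix.mul_assoc] using hfix
      · rw [trace_fromRows_submatrix_inl_transpose_mul_nonsing_inv hdet hsymm hV]
        simp only [transpose_mul, Matrix.mul_assoc]
    · rintro ⟨V, Sig, hSig, hV, hfix, rfl⟩
      refine ⟨Ψ.submatrix Sum.inl id * V, Sig, hSig, ?_, ?_⟩
      · rw [mul_nonsing_inv_mul_fromRows_submatrix_inl hdet hV]
        simpa only [transpose_mul, Matrix.mul_assoc] using hfix
      · rw [trace_fromRows_submatrix_inl_transpose_mul_nonsing_inv hdet hsymm hV]
        simp only [transpose_mul, Matrix.mul_assoc]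
  exact ⟨hJ, congrArg sInf hJ⟩
end

section
/- Let σ_w² > 0, λ ≥ 0, let Q ∈ ℝ^{n×n} and R ∈ ℝ^{m×m} be symmetric positive semidefinite, let Ψ ∈ ℝ^{(n+m)×(n+m)} be symmetric positive semidefinite with first m rows Ψ₁ and last n rows Ψ₂, and let X̄₁ ∈ ℝ^{n×(n+m)}. Suppose Σ ∈ ℝ^{n×n}, S ∈ ℝ^{(n+m)×n}, L ∈ ℝ^{m×m}, M ∈ ℝ^{(n+m)×(n+m)} satisfy Ψ₂ S = Σ and the three block matrices [[Σ − σ_w² Iₙ, X̄₁ S],[Sᵀ X̄₁ᵀ, Σ]], [[L, Ψ₁ S],[Sᵀ Ψ₁ᵀ, Σ]], [[M, S],[Sᵀ, Σ]] are symmetric positive semidefinite. Then Σ is positive definite, and V := S Σ⁻¹ satisfies: Ψ₂ V = Iₙ; Σ − σ_w² Iₙ − X̄₁ V Σ Vᵀ X̄₁ᵀ is positive semidefinite; L − Ψ₁ V Σ Vᵀ Ψ₁ᵀ is positive semidefinite; M − V Σ Vᵀ is positive semidefinite; and Tr(Q Σ) + Tr(R L) + λ Tr(M Ψ) ≥ Tr((Q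 + Vᵀ Ψ₁ᵀ R Ψ₁ V)Σ) + λ Tr(Ψ V Σ Vᵀ). -/
/-!
The top-left block of the first LMI gives `Σ ⪰ σ_w² I ≻ 0`, so `Σ` is invertible and
`V Σ Vᵀ = S Σ⁻¹ Sᵀ` for `V = S Σ⁻¹`. Each LMI is then, by its Schur complement with respect
to the block `Σ`, exactly one of the three matrix inequalities for `V`. The cost inequality follows
because `Tr (C A) ≤ Tr (C B)` whenever `C ⪰ 0` and `A ⪯ B`, applied with `C = R` and `C = Ψ`.
-/

open Matrix

open scoped ComplexOrder

namespace Matrix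

variable {ι κ ν : Type*}

theorem PosSemidef.trace_mul_nonneg [Fintype ι] {𝕜 : Type*} [RCLike 𝕜]
    {A B : Matrix ι ι 𝕜} (hA : A.PosSemidef) (hB : B.PosSemidef) : 0 ≤ (A * B).trace := by
  classical
  open scoped MatrixOrder in
  obtain ⟨C, rfl⟩ := CStarAlgebra.nonneg_iff_eq_star_mul_self.mp hA.nonneg
  rw [Matrix.mul_assoc, trace_mul_comm]
  exact (hB.mul_mul_conjTranspose_same C).trace_nonneg

theorem PosSemidef.trace_mul_le_trace_mul [Fintype ι] {𝕜 : Type*} [RCLike 𝕜]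
    {A B C : Matrix ι ι 𝕜} (hC : C.PosSemidef) (hAB : (B - A).PosSemidef) :
    (C * A).trace ≤ (C * B).trace := by
  have := hC.trace_mul_nonneg hAB
  rwa [Matrix.mul_sub, trace_sub, sub_nonneg] at this

theorem PosSemidef.fromBlocks₁₁ {R : Type*} [CommRing R] [PartialOrder R] [StarRing R]
    {A : Matrix ι ι R} {B : Matrix ι κ R} {C : Matrix κ ι R} {D : Matrix κ κ R}
    (h : (fromBlocks A B C D).PosSemidef) : A.PosSemidef :=
  h.submatrix Sum.inl

theorem posDef_of_posSemidef_sub_smul_one [Fintype ι] [DecidableEq ι] {A : Matrix ι ι ℝ}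
    {c : ℝ} (hc : 0 < c) (h : (A - c • (1 : Matrix ι ι ℝ)).PosSemidef) : A.PosDef := by
  simpa using PosDef.posSemidef_add h (PosDef.one.smul hc)

theorem PosSemidef.sub_mul_inv_mul_transpose_of_fromBlocks [Fintype ι] [Fintype κ]
    [DecidableEq κ] {A : Matrix ι ι ℝ} {B : Matrix ι κ ℝ} {D : Matrix κ κ ℝ}
    (hD : D.PosDef) (h : (fromBlocks A B Bᵀ D).PosSemidef) : (A - B * D⁻¹ * Bᵀ).PosSemidef := by
  have := D.invertibleOfIsUnitDet ((isUnit_iff_isUnit_det D).mp hD.isUnit)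
  rw [← conjTranspose_eq_transpose_of_trivial] at h ⊢
  exact (PosDef.fromBlocks₂₂ A B hD).mp h

theorem mul_mul_inv_mul_mul_inv_transpose {R : Type*} [CommRing R] [Fintype κ] [Fintype ν]
    [DecidableEq κ] (X : Matrix ι ν R) (S : Matrix ν κ R) {D : Matrix κ κ R}
    (hD : IsUnit D.det) (hDT : Dᵀ = D) :
    X * (S * D⁻¹) * D * (S * D⁻¹)ᵀ * Xᵀ = X * S * D⁻¹ * (X * S)ᵀ := by
  rw [transpose_mul, transpose_mul, transpose_nonsing_inv, hDT]
  simp only [Matrix.mul_assoc, mul_nonsing_inv_cancel_left _ _ hD]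

theorem PosSemidef.sub_conj_of_fromBlocks [Fintype ι] [Fintype κ] [Fintype ν] [DecidableEq κ]
    {A : Matrix ι ι ℝ} (X : Matrix ι ν ℝ) {S : Matrix ν κ ℝ} {D : Matrix κ κ ℝ}
    (hD : D.PosDef) (h : (fromBlocks A (X * S) (Sᵀ * Xᵀ) D).PosSemidef) :
    (A - X * (S * D⁻¹) * D * (S * D⁻¹)ᵀ * Xᵀ).PosSemidef := by
  rw [← transpose_mul] at h
  rw [mul_mul_inv_mul_mul_inv_transpose X S ((isUnit_iff_isUnit_det D).mp hD.isUnit)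
    hD.isHermitian.eq]
  exact h.sub_mul_inv_mul_transpose_of_fromBlocks hD

end Matrix

theorem stmt8_general (n m : ℕ)
    (σw2 lam : ℝ) (hσ : 0 < σw2) (hlam : 0 ≤ lam)
    (Q : Matrix (Fin n) (Fin n) ℝ)
    (R : Matrix (Fin m) (Fin m) ℝ) (hR : R.PosSemidef)
    (Ψ : Matrix (Fin m ⊕ Fin n) (Fin m ⊕ Fin n) ℝ) (hΨ : Ψ.PosSemidef)
    (Xb : Matrix (Fin n) (Fin m ⊕ Fin n) ℝ)
    (Sig : Matrix (Fin n) (Fin n) ℝ)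
    (S : Matrix (Fin m ⊕ Fin n) (Fin n) ℝ)
    (L : Matrix (Fin m) (Fin m) ℝ)
    (M : Matrix (Fin m ⊕ Fin n) (Fin m ⊕ Fin n) ℝ)
    (hfeas : Ψ.submatrix Sum.inr id * S = Sig)
    (hblk1 : (fromBlocks (Sig - σw2 • (1 : Matrix (Fin n) (Fin n) ℝ)) (Xb * S)
        (Sᵀ * Xbᵀ) Sig).PosSemidef)
    (hblk2 : (fromBlocks L (Ψ.submatrix Sum.inl id * S)
        (Sᵀ * (Ψ.submatrix Sum.inl id)ᵀ) Sig).PosSemidef)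
    (hblk3 : (fromBlocks M S Sᵀ Sig).PosSemidef) :
    Sig.PosDef ∧
    Ψ.submatrix Sum.inr id * (S * Sig⁻¹) = 1 ∧
    (Sig - σw2 • (1 : Matrix (Fin n) (Fin n) ℝ)
      - Xb * (S * Sig⁻¹) * Sig * (S * Sig⁻¹)ᵀ * Xbᵀ).PosSemidef ∧
    (L - Ψ.submatrix Sum.inl id * (S * Sig⁻¹) * Sig * (S * Sig⁻¹)ᵀ
        * (Ψ.submatrix Sum.inl id)ᵀ).PosSemidef ∧
    (M - (S * Sig⁻¹) * Sig * (S * Sig⁻¹)ᵀ).PosSemidef ∧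
    ((Q + (S * Sig⁻¹)ᵀ * (Ψ.submatrix Sum.inl id)ᵀ * R * Ψ.submatrix Sum.inl id
        * (S * Sig⁻¹)) * Sig).trace
      + lam * (Ψ * (S * Sig⁻¹) * Sig * (S * Sig⁻¹)ᵀ).trace
      ≤ (Q * Sig).trace + (R * L).trace + lam * (M * Ψ).trace := by
  set Ψ₁ := Ψ.submatrix Sum.inl (id : Fin m ⊕ Fin n → Fin m ⊕ Fin n)
  have hSig : Sig.PosDef := posDef_of_posSemidef_sub_smul_one hσ hblk1.fromBlocks₁₁
  have hL := hblk2.sub_conj_of_fromBlocks Ψ₁ hSig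
  have hM : (M - S * Sig⁻¹ * Sig * (S * Sig⁻¹)ᵀ).PosSemidef := by
    have := PosSemidef.sub_conj_of_fromBlocks (1 : Matrix (Fin m ⊕ Fin n) (Fin m ⊕ Fin n) ℝ)
      hSig (by rwa [Matrix.one_mul, transpose_one, Matrix.mul_one])
    rwa [Matrix.one_mul, transpose_one, Matrix.mul_one] at this
  refine ⟨hSig, ?_, hblk1.sub_conj_of_fromBlocks Xb hSig, hL, hM, ?_⟩
  · rw [← Matrix.mul_assoc, hfeas, mul_nonsing_inv _ ((isUnit_iff_isUnit_det _).mp hSig.isUnit)]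
  set V := S * Sig⁻¹
  have hRterm : ((Vᵀ * Ψ₁ᵀ * R * Ψ₁ * V) * Sig).trace ≤ (R * L).trace := by
    calc ((Vᵀ * Ψ₁ᵀ * R * Ψ₁ * V) * Sig).trace
        = (R * (Ψ₁ * V * Sig * Vᵀ * Ψ₁ᵀ)).trace := by
          rw [show Vᵀ * Ψ₁ᵀ * R * Ψ₁ * V * Sig = (Vᵀ * Ψ₁ᵀ) * (R * Ψ₁ * V * Sig) by
              simp only [Matrix.mul_assoc], trace_mul_comm]
          simp only [Matrix.mul_assoc]
      _ ≤ (R * L).trace := hR.trace_mul_le_trace_mul hL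
  have hΨterm : (Ψ * V * Sig * Vᵀ).trace ≤ (M * Ψ).trace := by
    calc (Ψ * V * Sig * Vᵀ).trace
        = (Ψ * (V * Sig * Vᵀ)).trace := by simp only [Matrix.mul_assoc]
      _ ≤ (Ψ * M).trace := hΨ.trace_mul_le_trace_mul hM
      _ = (M * Ψ).trace := trace_mul_comm Ψ M
  rw [Matrix.add_mul, trace_add]
  linarith [mul_le_mul_of_nonneg_left hΨterm hlam]

/-- forward direction of Proposition 1. A feasible point
`(Σ, S, L, M)` of the SDP yields, via `V := S Σ⁻¹`, a feasible point of the direct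
Bayesian LQR problem with relaxed Lyapunov inequality and no larger cost.  Moreover `Σ` is
positive definite. -/
theorem stmt8 (n m : ℕ)
    (σw2 lam : ℝ) (hσ : 0 < σw2) (hlam : 0 ≤ lam)
    (Q : Matrix (Fin n) (Fin n) ℝ) (hQ : Q.PosSemidef)
    (R : Matrix (Fin m) (Fin m) ℝ) (hR : R.PosSemidef)
    (Ψ : Matrix (Fin m ⊕ Fin n) (Fin m ⊕ Fin n) ℝ) (hΨ : Ψ.PosSemidef)
    (Xb : Matrix (Fin n) (Fin m ⊕ Fin n) ℝ)
    (Sig : Matrix (Fin n) (Fin n) ℝ)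
    (S : Matrix (Fin m ⊕ Fin n) (Fin n) ℝ)
    (L : Matrix (Fin m) (Fin m) ℝ)
    (M : Matrix (Fin m ⊕ Fin n) (Fin m ⊕ Fin n) ℝ)
    (hfeas : Ψ.submatrix Sum.inr id * S = Sig)
    (hblk1 : (fromBlocks (Sig - σw2 • (1 : Matrix (Fin n) (Fin n) ℝ)) (Xb * S)
        (Sᵀ * Xbᵀ) Sig).PosSemidef)
    (hblk2 : (fromBlocks L (Ψ.submatrix Sum.inl id * S)
        (Sᵀ * (Ψ.submatrix Sum.inl id)ᵀ) Sig).PosSemidef)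
    (hblk3 : (fromBlocks M S Sᵀ Sig).PosSemidef) :
    Sig.PosDef ∧
    Ψ.submatrix Sum.inr id * (S * Sig⁻¹) = 1 ∧
    (Sig - σw2 • (1 : Matrix (Fin n) (Fin n) ℝ)
      - Xb * (S * Sig⁻¹) * Sig * (S * Sig⁻¹)ᵀ * Xbᵀ).PosSemidef ∧
    (L - Ψ.submatrix Sum.inl id * (S * Sig⁻¹) * Sig * (S * Sig⁻¹)ᵀ
        * (Ψ.submatrix Sum.inl id)ᵀ).PosSemidef ∧
    (M - (S * Sig⁻¹) * Sig * (S * Sig⁻¹)ᵀ).PosSemidef ∧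
    ((Q + (S * Sig⁻¹)ᵀ * (Ψ.submatrix Sum.inl id)ᵀ * R * Ψ.submatrix Sum.inl id
        * (S * Sig⁻¹)) * Sig).trace
      + lam * (Ψ * (S * Sig⁻¹) * Sig * (S * Sig⁻¹)ᵀ).trace
      ≤ (Q * Sig).trace + (R * L).trace + lam * (M * Ψ).trace :=
  stmt8_general n m σw2 lam hσ hlam Q R hR Ψ hΨ Xb Sig S L M hfeas hblk1 hblk2 hblk3
end

section
/- Let σ_w² ∈ ℝ, λ ∈ ℝ, Q ∈ ℝ^{n×n}, R ∈ ℝ^{m×m}, let Ψ ∈ ℝ^{(n+m)×(n+m)} with first m rows Ψ₁ and last n rows Ψ₂, and let X̄₁ ∈ ℝ^{n×(n+m)}. Suppose V ∈ ℝ^{(n+m)×n} and a symmetric positive definite Σ ∈ ℝ^{n×n} satisfy Ψ₂ V = Iₙ and Σ = σ_w² Iₙ + X̄₁ V Σ Vᵀ X̄₁ᵀ. Define S := V Σ, L := Ψ₁ V Σ Vᵀ Ψ₁ᵀ, M := V Σ Vᵀ. Then Ψ₂ S = Σ, the three block matrices [[Σ − σ_w² Iₙ, X̄₁ S],[Sᵀ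 X̄₁ᵀ, Σ]], [[L, Ψ₁ S],[Sᵀ Ψ₁ᵀ, Σ]], [[M, S],[Sᵀ, Σ]] are symmetric positive semidefinite, and Tr(Q Σ) + Tr(R L) + λ Tr(M Ψ) = Tr((Q + Vᵀ Ψ₁ᵀ R Ψ₁ V)Σ) + λ Tr(Ψ V Σ Vᵀ). -/
/-!
With `S := VΣ`, each of the three block matrices is a congruence `[A; I] Σ [A; I]ᵀ` of `Σ`,
for `A = X̄₁V`, `Ψ₁V` and `V` respectively (the first after using the Lyapunov equation to
write `Σ - σ_w² I = X̄₁VΣVᵀX̄₁ᵀ`), hence positive semidefinite. The objective values agree by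
cyclicity of the trace.
-/

open Matrix

theorem Matrix.PosSemidef.fromBlocks_mul_mul_conjTranspose_same {K N R : Type*}
    [Ring R] [PartialOrder R] [StarRing R] [Fintype K] [Fintype N] [DecidableEq N]
    {S : Matrix N N R} (hS : S.PosSemidef) (A : Matrix K N R) :
    (fromBlocks (A * S * Aᴴ) (A * S) (S * Aᴴ) S).PosSemidef := by
  simpa [conjTranspose_fromRows_eq_fromCols_conjTranspose, fromRows_mul, fromRows_mul_fromCols]
    using hS.mul_mul_conjTranspose_same (fromRows A (1 : Matrix N N R))

theorem Matrix.PosSemidef.fromBlocks_mul_mul_transpose_same {K N : Type*}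
    [Fintype K] [Fintype N] [DecidableEq N]
    {S : Matrix N N ℝ} (hS : S.PosSemidef) (A : Matrix K N ℝ) :
    (fromBlocks (A * S * Aᵀ) (A * S) (A * S)ᵀ S).PosSemidef := by
  have hST : Sᵀ = S := hS.isHermitian.eq
  rw [transpose_mul, hST]
  exact hS.fromBlocks_mul_mul_conjTranspose_same A

theorem Matrix.trace_mul_mul_mul_transpose_mul_transpose {K L N R : Type*}
    [CommRing R] [Fintype K] [Fintype L] [Fintype N]
    (C : Matrix K K R) (B : Matrix K L R) (V : Matrix L N R) (S : Matrix N N R) :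
    (C * (B * V * S * Vᵀ * Bᵀ)).trace = (Vᵀ * Bᵀ * C * B * V * S).trace := by
  rw [show Vᵀ * Bᵀ * C * B * V * S = (Vᵀ * Bᵀ) * (C * B * V * S) by simp only [Matrix.mul_assoc],
    trace_mul_comm (Vᵀ * Bᵀ)]
  simp only [Matrix.mul_assoc]

/-- converse direction of Proposition 1. A feasible point `(V, Σ)` of
the direct Bayesian LQR problem yields, via `S := VΣ`, `L := Ψ₁VΣVᵀΨ₁ᵀ`, `M := VΣVᵀ`, a
feasible point of the SDP with equal objective value. -/
theorem stmt9 (n m : ℕ)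
    (σw2 lam : ℝ)
    (Q : Matrix (Fin n) (Fin n) ℝ) (R : Matrix (Fin m) (Fin m) ℝ)
    (Ψ : Matrix (Fin m ⊕ Fin n) (Fin m ⊕ Fin n) ℝ)
    (Xb : Matrix (Fin n) (Fin m ⊕ Fin n) ℝ)
    (V : Matrix (Fin m ⊕ Fin n) (Fin n) ℝ)
    (Sig : Matrix (Fin n) (Fin n) ℝ) (hSig : Sig.PosDef)
    (hV : Ψ.submatrix Sum.inr id * V = 1)
    (hlyap : Sig = σw2 • (1 : Matrix (Fin n) (Fin n) ℝ) + Xb * V * Sig * Vᵀ * Xbᵀ) :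
    Ψ.submatrix Sum.inr id * (V * Sig) = Sig ∧
    (fromBlocks (Sig - σw2 • (1 : Matrix (Fin n) (Fin n) ℝ)) (Xb * (V * Sig))
      ((V * Sig)ᵀ * Xbᵀ) Sig).PosSemidef ∧
    (fromBlocks (Ψ.submatrix Sum.inl id * V * Sig * Vᵀ * (Ψ.submatrix Sum.inl id)ᵀ)
      (Ψ.submatrix Sum.inl id * (V * Sig))
      ((V * Sig)ᵀ * (Ψ.submatrix Sum.inl id)ᵀ) Sig).PosSemidef ∧
    (fromBlocks (V * Sig * Vᵀ) (V * Sig) (V * Sig)ᵀ Sig).PosSemidef ∧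
    (Q * Sig).trace
      + (R * (Ψ.submatrix Sum.inl id * V * Sig * Vᵀ * (Ψ.submatrix Sum.inl id)ᵀ)).trace
      + lam * ((V * Sig * Vᵀ) * Ψ).trace
    = ((Q + Vᵀ * (Ψ.submatrix Sum.inl id)ᵀ * R * Ψ.submatrix Sum.inl id * V) * Sig).trace
      + lam * (Ψ * V * Sig * Vᵀ).trace := by
  have hpsd := hSig.posSemidef
  have hsub : Sig - σw2 • (1 : Matrix (Fin n) (Fin n) ℝ) = Xb * V * Sig * Vᵀ * Xbᵀ := by
    nth_rewrite 1 [hlyap]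
    exact add_sub_cancel_left _ _
  refine ⟨by rw [← Matrix.mul_assoc, hV, one_mul], ?_, ?_, hpsd.fromBlocks_mul_mul_transpose_same V,
    ?_⟩
  · simpa only [hsub, transpose_mul, Matrix.mul_assoc]
      using hpsd.fromBlocks_mul_mul_transpose_same (Xb * V)
  · simpa only [transpose_mul, Matrix.mul_assoc]
      using hpsd.fromBlocks_mul_mul_transpose_same (Ψ.submatrix Sum.inl id * V)
  · rw [add_mul, trace_add, trace_mul_mul_mul_transpose_mul_transpose, trace_mul_comm _ Ψ]
    simp only [Matrix.mul_assoc]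
end
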